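/- arXiv:2301.12014 — 2 statements merged into one kernel-verified Lean document; each statement's English description precedes it below -/
import Mathlib

section
/- Let G be a non-archimedean CLI Polish group and 𝒢 = (G_n) ∈ dgnb(G). Then: (1) ρ(𝒢) = sup{ρ^k(𝒢) : k < ω}; (2) (ρ^k(𝒢))_{k<ω} is an increasing sequence of countable ordinals, each of which is either 0 or a successor ordinal. -/
/-!
A complete left-invariant metric makes every sequence `w` with `(w i)⁻¹ * w (i+1) ∈ G_{n_i}`,
`n_i → ∞`, converge. An infinite branch `(n_i, C_i)` of `T_𝒢^X` yields such a sequence with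
`(w i)⁻¹ • y ∈ C_i`, and its limit `x` gives a point `x⁻¹ • y` lying in every `C_i`; as its
stabilizer is open, some `C_i` is a singleton. So the trees `T_𝒢^X` of discrete `G`-spaces are
well-founded, and their ranks can be compared by simulation: an injective equivariant map
`X → Y` pushes nodes of `T_𝒢^X` forward, and a node of `T_𝒢^Y` lifts along an equivariant map
through any point of its preimage. Applied to the inclusions `G/G_k → X(𝒢)` and to the
projections `G/G_{k+1} → G/G_k` this gives (1) and monotonicity. Countability of `G/G_k` bounds
`ρ^k(𝒢)` by `ω₁`, and the root `(0, G/G_k)` lies below every other node, so `ρ^k(𝒢)` is `0` or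
a successor.
-/

noncomputable section

/-- `omegaPart a` is ω(a): the largest limit ordinal `≤ a`, or `0` if there is none. -/
def omegaPart (a : Ordinal) : Ordinal :=
  sSup {b : Ordinal | (b = 0 ∨ Order.IsSuccLimit b) ∧ b ≤ a}

/-- `IsTree lt` says that the binary relation `lt` on `T` is a tree order: it is irreflexive,
transitive, and the set of predecessors of any node is finite and linearly ordered. -/
def IsTree {T : Type*} (lt : T → T → Prop) : Prop :=
  (∀ s, ¬ lt s s) ∧
  (∀ s t u, lt s t → lt t u → lt s u) ∧
  (∀ s, {t | lt t s}.Finite) ∧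
  (∀ s t u, lt t s → lt u s → t = u ∨ lt t u ∨ lt u t)

/-- The length `lh s` of a node of a tree: the number of its strict predecessors. -/
def lh {T : Type*} (lt : T → T → Prop) (s : T) : ℕ :=
  Nat.card {t | lt t s}

/-- The rank `ρ(T)` of a tree `(T, lt)`: for a well-founded tree it is
`sup { ρ_T(s) + 1 : s ∈ T }` where `ρ_T(s) = sup { ρ_T(t) + 1 : s < t }`;
for an ill-founded tree we use the junk value `0`. -/
def rhoRel {T : Type u} (lt : T → T → Prop) : Ordinal.{u} :=
  letI := Classical.dec (WellFounded (Function.swap lt))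
  if h : WellFounded (Function.swap lt) then ⨆ s : T, Order.succ ((h.apply s).rank) else 0

/-- The nodes of the tree `T_ℰ^X` associated to a sequence `E` of (equivalence) relations
on `X`: pairs `(n, C)` where `C` is a non-singleton class `[x]_{E n}`. -/
def TreeNode (X : Type u) (E : ℕ → X → X → Prop) : Type u :=
  {p : ℕ × Set X // ∃ x : X, p.2 = {y | E p.1 x y} ∧ p.2 ≠ {x}}

/-- The tree order on `T_ℰ^X`: `(n, C) < (m, D)` iff `n < m` and `C ⊇ D`. -/
def nodeLT {X : Type u} (E : ℕ → X → X → Prop) :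
    TreeNode X E → TreeNode X E → Prop :=
  fun s t => s.1.1 < t.1.1 ∧ t.1.2 ⊆ s.1.2

/-- The tree `T_ℰ^X` is well-founded: no infinite strictly increasing sequence. -/
def TreeWF (X : Type u) (E : ℕ → X → X → Prop) : Prop :=
  WellFounded (Function.swap (nodeLT E))

/-- The rank `ρ(T_ℰ^X)`. -/
def treeRho (X : Type u) (E : ℕ → X → X → Prop) : Ordinal.{u} :=
  rhoRel (nodeLT E)

/-- A Polish group: a topological group whose topology is Polish. -/
def IsPolishGroup (G : Type u) [Group G] [TopologicalSpace G] : Prop :=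
  IsTopologicalGroup G ∧ PolishSpace G

/-- A topological group is non-archimedean if the open subgroups form a
neighborhood base of the identity. -/
def IsNonArch (G : Type u) [Group G] [TopologicalSpace G] : Prop :=
  ∀ U ∈ nhds (1 : G), ∃ H : Subgroup G, IsOpen (H : Set G) ∧ (H : Set G) ⊆ U

/-- A topological group is CLI if it admits a compatible complete left-invariant metric. -/
def IsCLI (G : Type u) [Group G] [TopologicalSpace G] : Prop :=
  ∃ m : MetricSpace G,
    m.toUniformSpace.toTopologicalSpace = ‹TopologicalSpace G› ∧
    @CompleteSpace G m.toUniformSpace ∧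
    ∀ g h k : G, m.dist (g * h) (g * k) = m.dist h k

/-- A topological group is TSI if it admits a compatible complete two-sided-invariant metric. -/
def IsTSI (G : Type u) [Group G] [TopologicalSpace G] : Prop :=
  ∃ m : MetricSpace G,
    m.toUniformSpace.toTopologicalSpace = ‹TopologicalSpace G› ∧
    @CompleteSpace G m.toUniformSpace ∧
    ∀ g h k : G, m.dist (g * h) (g * k) = m.dist h k ∧ m.dist (h * g) (k * g) = m.dist h k

/-- `Dgnb G` is the set `dgnb(G)`: decreasing sequences `(G_n)` of open subgroups of `G`
with `G_0 = G` forming a neighborhood base of `1_G`. -/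
structure Dgnb (G : Type u) [Group G] [TopologicalSpace G] where
  seq : ℕ → Subgroup G
  isOpen : ∀ n, IsOpen ((seq n : Set G))
  antitone : ∀ n, seq (n + 1) ≤ seq n
  zero_eq_top : seq 0 = ⊤
  basis : ∀ U ∈ nhds (1 : G), ∃ n, ((seq n : Set G)) ⊆ U

/-- The orbit equivalence relation of (the action of) a subgroup `H ≤ G` on a `G`-space `X`:
`x ∼ y` iff `g • x = y` for some `g ∈ H`. -/
def subOrbit {G : Type u} [Group G] (H : Subgroup G) (X : Type v) [MulAction G X] :
    X → X → Prop :=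
  fun x y => ∃ g ∈ H, g • x = y

/-- The tree `T_𝒢^X` of a `𝒢 ∈ dgnb(G)` and a `G`-space `X`: nodes are pairs `(n, C)`
with `C` a non-singleton `G_n`-orbit. We record it by its defining sequence of relations. -/
def dgnbRel {G : Type u} [Group G] [TopologicalSpace G] (𝒢 : Dgnb G) (X : Type v)
    [MulAction G X] : ℕ → X → X → Prop :=
  fun n => subOrbit (𝒢.seq n) X

/-- `ρ^k(𝒢) = ρ(T_𝒢^{G/G_k})`, where `G` acts by left translation on `G/G_k`. -/
def rhoK {G : Type u} [Group G] [TopologicalSpace G] (𝒢 : Dgnb G) (k : ℕ) : Ordinal.{u} :=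
  treeRho (G ⧸ 𝒢.seq k) (dgnbRel 𝒢 (G ⧸ 𝒢.seq k))

/-- `ρ(𝒢) = ρ(T_𝒢^{X(𝒢)})` where `X(𝒢) = ⊔_k G/G_k` is the disjoint union of the coset
spaces, with `G` acting by left translation on each summand. -/
def rhoDgnb {G : Type u} [Group G] [TopologicalSpace G] (𝒢 : Dgnb G) : Ordinal.{u} :=
  treeRho (Σ k : ℕ, G ⧸ 𝒢.seq k)
    (fun n p q => ∃ g ∈ 𝒢.seq n, q = ⟨p.1, g • p.2⟩)

/-- `G` is α-CLI if `ρ(𝒢) ≤ ω·α` for any (equivalently, some) `𝒢 ∈ dgnb(G)`. -/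
def IsAlphaCLI (G : Type u) [Group G] [TopologicalSpace G] (α : Ordinal.{u}) : Prop :=
  ∀ 𝒢 : Dgnb G, rhoDgnb 𝒢 ≤ Ordinal.omega0 * α

/-- `G` is L-α-CLI if `rank(G) ≤ α`, i.e. `ω(ρ(𝒢)) ≤ ω·α` for any (equivalently, some)
`𝒢 ∈ dgnb(G)`. -/
def IsLAlphaCLI (G : Type u) [Group G] [TopologicalSpace G] (α : Ordinal.{u}) : Prop :=
  ∀ 𝒢 : Dgnb G, omegaPart (rhoDgnb 𝒢) ≤ Ordinal.omega0 * α


open Function Set MulAction Filter Topology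
open scoped Ordinal

namespace IsWellFounded

variable {α β : Type u} {r : α → α → Prop} {r' : β → β → Prop}
  [IsWellFounded α r] [IsWellFounded β r']

theorem rank_le_of_simulation (R : α → β → Prop)
    (hR : ∀ a b, R a b → ∀ a', r a' a → ∃ b', r' b' b ∧ R a' b') {a : α} {b : β}
    (hab : R a b) : rank r a ≤ rank r' b := by
  induction a using IsWellFounded.induction r generalizing b with
  | ind a ih =>
    rw [rank_eq]
    refine Ordinal.iSup_le fun ⟨a', ha'⟩ => ?_
    obtain ⟨b', hb', hR'⟩ := hR a b hab a' ha'
    exact Order.succ_le_of_lt ((ih a' ha' hR').trans_lt (rank_lt_of_rel hb'))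

theorem rank_lt_omega_one [Countable α] (a : α) : rank r a < ω₁ := by
  induction a using IsWellFounded.induction r with
  | ind a ih =>
    rw [rank_eq]
    exact Ordinal.iSup_lt_omega_one fun b =>
      (Cardinal.isSuccLimit_omega 1).succ_lt (ih b b.2)

end IsWellFounded

section rhoRel

open IsWellFounded

variable {T T' : Type u} {lt : T → T → Prop} {lt' : T' → T' → Prop}

theorem rhoRel_eq_iSup_rank [IsWellFounded T (swap lt)] :
    rhoRel lt = ⨆ s, Order.succ (rank (swap lt) s) :=
  dif_pos IsWellFounded.wf

theorem rhoRel_of_isEmpty [IsEmpty T] : rhoRel lt = 0 := by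
  unfold rhoRel
  split_ifs <;> simp

variable [IsWellFounded T (swap lt)]

theorem succ_rank_le_rhoRel (s : T) : Order.succ (rank (swap lt) s) ≤ rhoRel lt :=
  rhoRel_eq_iSup_rank (lt := lt) ▸ Ordinal.le_iSup _ s

theorem rhoRel_le_of_forall_exists_rank_le [IsWellFounded T' (swap lt')]
    (h : ∀ s, ∃ s', rank (swap lt) s ≤ rank (swap lt') s') : rhoRel lt ≤ rhoRel lt' := by
  rw [rhoRel_eq_iSup_rank]
  refine Ordinal.iSup_le fun s => ?_
  obtain ⟨s', hs'⟩ := h s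
  exact (Order.succ_le_succ hs').trans (succ_rank_le_rhoRel s')

theorem rhoRel_lt_omega_one [Countable T] : rhoRel lt < ω₁ := by
  rw [rhoRel_eq_iSup_rank]
  exact Ordinal.iSup_lt_omega_one fun s =>
    (Cardinal.isSuccLimit_omega 1).succ_lt (rank_lt_omega_one s)

theorem rhoRel_eq_succ_of_forall_lt (root : T) (hroot : ∀ s, s ≠ root → lt root s) :
    rhoRel lt = Order.succ (rank (swap lt) root) := by
  rw [rhoRel_eq_iSup_rank]
  refine le_antisymm (Ordinal.iSup_le fun s => ?_) (Ordinal.le_iSup _ root)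
  rcases eq_or_ne s root with rfl | hs
  · rfl
  · exact Order.succ_le_succ (rank_lt_of_rel (r := swap lt) (hroot s hs)).le

end rhoRel

section OrbitTree

variable {G : Type u} [Group G] {X Y : Type v} [MulAction G X] [MulAction G Y]

theorem MulAction.orbit_subgroup_mono {H K : Subgroup G} (hHK : H ≤ K) (x : X) :
    orbit H x ⊆ orbit K x := by
  rintro _ ⟨h, rfl⟩
  exact ⟨⟨h, hHK h.2⟩, rfl⟩

theorem MulAction.orbit_subgroup_eq_singleton {H : Subgroup G} {x : X}
    (h : H ≤ stabilizer G x) : orbit H x = {x} := by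
  refine Set.eq_singleton_iff_unique_mem.2 ⟨mem_orbit_self x, ?_⟩
  rintro _ ⟨g, rfl⟩
  exact h g.2

theorem MulAction.orbit_top_subgroup [IsPretransitive G X] (x : X) :
    orbit (⊤ : Subgroup G) x = univ := by
  refine eq_univ_of_forall fun y => ?_
  obtain ⟨g, rfl⟩ := exists_smul_eq G x y
  exact ⟨⟨g, Subgroup.mem_top g⟩, rfl⟩

theorem MulActionHom.image_orbit_subgroup (f : X →[G] Y) (H : Subgroup G) (x : X) :
    f '' orbit H x = orbit H (f x) := by
  ext y
  simp [mem_orbit_iff, Subgroup.smul_def, ← map_smul]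

variable [TopologicalSpace G] {𝒢 : Dgnb G}

theorem Dgnb.seq_antitone (𝒢 : Dgnb G) : Antitone 𝒢.seq :=
  antitone_nat_of_succ_le 𝒢.antitone

theorem Dgnb.exists_le_of_isOpen (𝒢 : Dgnb G) {H : Subgroup G} (hH : IsOpen (H : Set G)) :
    ∃ m, 𝒢.seq m ≤ H :=
  𝒢.basis _ (hH.mem_nhds H.one_mem)

theorem setOf_dgnbRel (𝒢 : Dgnb G) (n : ℕ) (x : X) :
    {y | dgnbRel 𝒢 X n x y} = orbit (𝒢.seq n) x := by
  ext y
  simp [dgnbRel, subOrbit, mem_orbit_iff, Subgroup.smul_def]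

namespace TreeNode

variable (s : TreeNode X (dgnbRel 𝒢 X))

theorem exists_eq_orbit : ∃ x, s.1.2 = orbit (𝒢.seq s.1.1) x ∧ s.1.2 ≠ {x} := by
  obtain ⟨x, hx, hne⟩ := s.2
  exact ⟨x, hx.trans (setOf_dgnbRel 𝒢 _ x), hne⟩

theorem nonempty : s.1.2.Nonempty := by
  obtain ⟨x, hx, -⟩ := s.exists_eq_orbit
  exact ⟨x, hx ▸ mem_orbit_self x⟩

theorem eq_orbit_of_mem {x : X} (hx : x ∈ s.1.2) : s.1.2 = orbit (𝒢.seq s.1.1) x := by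
  obtain ⟨x₀, hx₀, -⟩ := s.exists_eq_orbit
  rw [hx₀] at hx ⊢
  exact (orbit_eq_iff.2 hx).symm

theorem ne_singleton (x : X) : s.1.2 ≠ {x} := by
  obtain ⟨x₀, hx₀, hne⟩ := s.exists_eq_orbit
  intro hx
  have : x₀ ∈ s.1.2 := hx₀ ▸ mem_orbit_self (M := 𝒢.seq s.1.1) x₀
  rw [hx, mem_singleton_iff] at this
  exact hne (this ▸ hx)

end TreeNode

variable (𝒢) in
def orbitNode (n : ℕ) (x : X) (h : orbit (𝒢.seq n) x ≠ {x}) : TreeNode X (dgnbRel 𝒢 X) :=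
  ⟨(n, orbit (𝒢.seq n) x), x, (setOf_dgnbRel 𝒢 n x).symm, h⟩

theorem nodeLT_orbitNode {s : TreeNode X (dgnbRel 𝒢 X)} {m : ℕ} {x : X} (hm : s.1.1 < m)
    (hx : x ∈ s.1.2) (h : orbit (𝒢.seq m) x ≠ {x}) : nodeLT _ s (orbitNode 𝒢 m x h) :=
  ⟨hm, (s.eq_orbit_of_mem hx).symm ▸ orbit_subgroup_mono (𝒢.seq_antitone hm.le) x⟩

namespace TreeNode

def map (f : X →[G] Y) (hf : Injective f) (s : TreeNode X (dgnbRel 𝒢 X)) :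
    TreeNode Y (dgnbRel 𝒢 Y) :=
  ⟨(s.1.1, f '' s.1.2), by
    obtain ⟨x, hx, hne⟩ := s.exists_eq_orbit
    refine ⟨f x, ?_, ?_⟩
    · rw [setOf_dgnbRel, hx, f.image_orbit_subgroup]
    · rwa [← image_singleton, hf.image_injective.ne_iff]⟩

theorem image_orbit_eq_of_mem (f : X →[G] Y) (t : TreeNode Y (dgnbRel 𝒢 Y)) {x : X}
    (hx : f x ∈ t.1.2) : f '' orbit (𝒢.seq t.1.1) x = t.1.2 := by
  rw [f.image_orbit_subgroup, t.eq_orbit_of_mem hx]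

def lift (f : X →[G] Y) (t : TreeNode Y (dgnbRel 𝒢 Y)) (x : X) (hx : f x ∈ t.1.2) :
    TreeNode X (dgnbRel 𝒢 X) :=
  orbitNode 𝒢 t.1.1 x fun h => t.ne_singleton (f x) <| by
    rw [← image_orbit_eq_of_mem f t hx, h, image_singleton]

variable [IsWellFounded _ (swap (nodeLT (dgnbRel 𝒢 X)))]
  [IsWellFounded _ (swap (nodeLT (dgnbRel 𝒢 Y)))]

open IsWellFounded

theorem rank_le_rank_map (f : X →[G] Y) (hf : Injective f) (s : TreeNode X (dgnbRel 𝒢 X)) :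
    rank (swap (nodeLT _)) s ≤ rank (swap (nodeLT _)) (s.map f hf) :=
  rank_le_of_simulation (fun s t => t = s.map f hf)
    (by rintro s _ rfl s' ⟨hlt, hsub⟩; exact ⟨s'.map f hf, ⟨hlt, image_mono hsub⟩, rfl⟩) rfl

theorem rank_le_rank_lift (f : X →[G] Y) (t : TreeNode Y (dgnbRel 𝒢 Y)) {x : X}
    (hx : f x ∈ t.1.2) : rank (swap (nodeLT _)) t ≤ rank (swap (nodeLT _)) (t.lift f x hx) := by
  refine rank_le_of_simulation (fun t s => t.1.1 = s.1.1 ∧ t.1.2 = f '' s.1.2) ?_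
    ⟨rfl, (image_orbit_eq_of_mem f t hx).symm⟩
  rintro t s ⟨hlevel, himage⟩ t' ⟨hlt, hsub⟩
  obtain ⟨_, hy⟩ := t'.nonempty
  obtain ⟨z, hz, rfl⟩ := himage ▸ hsub hy
  exact ⟨t'.lift f z hy, nodeLT_orbitNode (hlevel ▸ hlt) hz _, rfl,
    (image_orbit_eq_of_mem f t' hy).symm⟩

end TreeNode

end OrbitTree

section TreeRho

variable {G : Type u} [Group G] [TopologicalSpace G] {𝒢 : Dgnb G} {X Y : Type v}
  [MulAction G X] [MulAction G Y] [IsWellFounded _ (swap (nodeLT (dgnbRel 𝒢 X)))]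
  [IsWellFounded _ (swap (nodeLT (dgnbRel 𝒢 Y)))]

theorem treeRho_le_of_injective (f : X →[G] Y) (hf : Injective f) :
    treeRho X (dgnbRel 𝒢 X) ≤ treeRho Y (dgnbRel 𝒢 Y) :=
  rhoRel_le_of_forall_exists_rank_le fun s => ⟨_, s.rank_le_rank_map f hf⟩

theorem treeRho_le_of_surjective (f : X →[G] Y) (hf : Surjective f) :
    treeRho Y (dgnbRel 𝒢 Y) ≤ treeRho X (dgnbRel 𝒢 X) :=
  rhoRel_le_of_forall_exists_rank_le fun t => by
    obtain ⟨y, hy⟩ := t.nonempty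
    obtain ⟨x, rfl⟩ := hf y
    exact ⟨_, t.rank_le_rank_lift f hy⟩

theorem treeRho_eq_zero_or_succ [IsPretransitive G X] :
    treeRho X (dgnbRel 𝒢 X) = 0 ∨ ∃ β, treeRho X (dgnbRel 𝒢 X) = Order.succ β := by
  rcases subsingleton_or_nontrivial X with hX | hX
  · have : IsEmpty (TreeNode X (dgnbRel 𝒢 X)) := ⟨fun s => by
      obtain ⟨x, hx⟩ := s.nonempty
      exact s.ne_singleton x (subsingleton_of_subsingleton.eq_singleton_of_mem hx)⟩
    exact Or.inl rhoRel_of_isEmpty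
  · obtain ⟨x⟩ := hX.to_nonempty
    have horbit : ∀ y : X, orbit (𝒢.seq 0) y = univ := fun y => by
      rw [𝒢.zero_eq_top, orbit_top_subgroup]
    let root := orbitNode 𝒢 0 x fun h => (exists_ne x).elim fun y hy =>
      hy (by rw [← mem_singleton_iff, ← h, horbit]; trivial)
    refine Or.inr ⟨_, rhoRel_eq_succ_of_forall_lt root fun s hs => ?_⟩
    obtain ⟨y, hy⟩ := s.nonempty
    refine ⟨Nat.pos_of_ne_zero fun h0 => hs (Subtype.ext (Prod.ext h0 ?_)),
      fun z _ => (horbit x).ge (mem_univ z)⟩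
    change s.1.2 = orbit (𝒢.seq 0) x
    rw [s.eq_orbit_of_mem hy, h0, horbit, horbit]

end TreeRho

section CLI

variable {G : Type u} [Group G] [TopologicalSpace G]

theorem IsCLI.exists_tendsto (hcli : IsCLI G) {w : ℕ → G}
    (hw : ∀ U ∈ 𝓝 (1 : G), ∃ N, ∀ j ≥ N, (w N)⁻¹ * w j ∈ U) :
    ∃ x, Tendsto w atTop (𝓝 x) := by
  obtain ⟨m, rfl, hcomplete, hinv⟩ := hcli
  let := m
  refine cauchySeq_tendsto_of_complete (Metric.cauchySeq_iff'.2 fun ε hε => ?_)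
  obtain ⟨N, hN⟩ := hw _ (Metric.ball_mem_nhds 1 hε)
  refine ⟨N, fun j hj => ?_⟩
  have := hN j hj
  rwa [Metric.mem_ball, ← hinv (w N), mul_inv_cancel_left, mul_one] at this

theorem IsCLI.exists_forall_inv_mul_mem [ContinuousMul G] (hcli : IsCLI G)
    {H : ℕ → Subgroup G} (hH : Antitone H) (hclosed : ∀ i, IsClosed (H i : Set G))
    (hbasis : ∀ U ∈ 𝓝 (1 : G), ∃ N, (H N : Set G) ⊆ U) {w : ℕ → G}
    (hw : ∀ i, (w i)⁻¹ * w (i + 1) ∈ H i) : ∃ x, ∀ i, (w i)⁻¹ * x ∈ H i := by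
  have hmem : ∀ i j, i ≤ j → (w i)⁻¹ * w j ∈ H i := by
    intro i j hij
    induction j, hij using Nat.le_induction with
    | base => simp [(H i).one_mem]
    | succ j hij ih => simpa [mul_assoc] using (H i).mul_mem ih (hH hij (hw j))
  obtain ⟨x, hx⟩ := hcli.exists_tendsto fun U hU =>
    (hbasis U hU).imp fun N hN j hj => hN (hmem N j hj)
  exact ⟨x, fun i => ((hclosed i).preimage (continuous_const_mul (w i)⁻¹)).mem_of_tendsto hx
    (eventually_atTop.2 ⟨i, hmem i⟩)⟩

end CLI

section WellFounded

variable {G : Type u} [Group G] [TopologicalSpace G] {𝒢 : Dgnb G} {X : Type v} [MulAction G X]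

theorem TreeNode.exists_seq_inv_smul_mem {s : ℕ → TreeNode X (dgnbRel 𝒢 X)}
    (hs : ∀ i, nodeLT _ (s i) (s (i + 1))) :
    ∃ (y : X) (w : ℕ → G), (∀ i, (w i)⁻¹ * w (i + 1) ∈ 𝒢.seq (s i).1.1) ∧
      ∀ i, (w i)⁻¹ • y ∈ (s i).1.2 := by
  choose y hy using fun i => (s i).nonempty
  have hstep : ∀ i, ∃ h ∈ 𝒢.seq (s i).1.1, h • y i = y (i + 1) := fun i => by
    have := (hs i).2 (hy (i + 1))
    rw [(s i).eq_orbit_of_mem (hy i)] at this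
    obtain ⟨⟨h, hh⟩, e⟩ := this
    exact ⟨h, hh, e⟩
  choose h hmem hh using hstep
  let w : ℕ → G := fun i => Nat.rec 1 (fun i w => w * (h i)⁻¹) i
  have hw : ∀ i, (w i)⁻¹ • y 0 = y i := by
    intro i
    induction i with
    | zero => simp [w]
    | succ i ih => simp [w, mul_smul, ih, hh]
  exact ⟨y 0, w, fun i => by simpa [w] using (𝒢.seq _).inv_mem (hmem i),
    fun i => (hw i).symm ▸ hy i⟩

theorem treeWF_of_isOpen_stabilizer [IsTopologicalGroup G] (hcli : IsCLI G) (𝒢 : Dgnb G)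
    (hstab : ∀ x : X, IsOpen (stabilizer G x : Set G)) : TreeWF X (dgnbRel 𝒢 X) := by
  refine wellFounded_iff_isEmpty_descending_chain.2 ⟨fun ⟨s, hs⟩ => ?_⟩
  obtain ⟨y, w, hw, hwy⟩ := TreeNode.exists_seq_inv_smul_mem hs
  have hlevel : StrictMono fun i => (s i).1.1 := strictMono_nat_of_lt_succ fun i => (hs i).1
  obtain ⟨x, hx⟩ := hcli.exists_forall_inv_mul_mem
    (fun i j hij => 𝒢.seq_antitone (hlevel.monotone hij))
    (fun i => (𝒢.seq _).isClosed_of_isOpen (𝒢.isOpen _))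
    (fun U hU => (𝒢.basis U hU).imp fun N hN =>
      (SetLike.coe_subset_coe.2 (𝒢.seq_antitone hlevel.le_apply)).trans hN) hw
  have hmem : ∀ i, x⁻¹ • y ∈ (s i).1.2 := fun i => by
    rw [(s i).eq_orbit_of_mem (hwy i)]
    refine ⟨⟨((w i)⁻¹ * x)⁻¹, (𝒢.seq _).inv_mem (hx i)⟩, ?_⟩
    simp [Subgroup.smul_def, mul_smul]
  obtain ⟨m, hm⟩ := 𝒢.exists_le_of_isOpen (hstab (x⁻¹ • y))
  exact (s m).ne_singleton _ ((s m).eq_orbit_of_mem (hmem m) ▸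
    orbit_subgroup_eq_singleton ((𝒢.seq_antitone hlevel.le_apply).trans hm))

end WellFounded

def MulActionHom.sigmaMk {M ι : Type*} (α : ι → Type*) [Monoid M] [∀ i, MulAction M (α i)]
    (i : ι) : α i →[M] Σ i, α i where
  toFun := Sigma.mk i
  map_smul' _ _ := rfl

def Subgroup.quotientMapOfLEHom {G : Type*} [Group G] {H K : Subgroup G} (h : H ≤ K) :
    G ⧸ H →[G] G ⧸ K where
  toFun := quotientMapOfLE h
  map_smul' _ x := Quotient.inductionOn' x fun _ => rfl

theorem Subgroup.quotientMapOfLEHom_surjective {G : Type*} [Group G] {H K : Subgroup G}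
    (h : H ≤ K) : Surjective (quotientMapOfLEHom h) := fun y =>
  let ⟨a, ha⟩ := QuotientGroup.mk_surjective y
  ⟨a, ha⟩

theorem TreeNode.countable {X : Type*} [Countable X] (E : ℕ → X → X → Prop) :
    Countable (TreeNode X E) := by
  have : {p : ℕ × Set X | ∃ x, p.2 = {y | E p.1 x y} ∧ p.2 ≠ {x}} ⊆
      range fun p : ℕ × X => (p.1, {y | E p.1 p.2 y}) :=
    fun p ⟨x, hx, _⟩ => ⟨(p.1, x), (congrArg (Prod.mk p.1) hx).symm⟩
  exact ((countable_range _).mono this).to_subtype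

theorem QuotientGroup.countable_of_isOpen {G : Type*} [Group G] [TopologicalSpace G]
    [IsTopologicalGroup G] [TopologicalSpace.SeparableSpace G] {H : Subgroup G}
    (hH : IsOpen (H : Set G)) : Countable (G ⧸ H) :=
  have := QuotientGroup.discreteTopology hH
  TopologicalSpace.separableSpace_iff_countable.1 (isQuotientMap_mk H).separableSpace

namespace Dgnb

variable {G : Type u} [Group G] [TopologicalSpace G] (𝒢 : Dgnb G)

theorem rhoDgnb_eq : rhoDgnb 𝒢 = treeRho (Σ k, G ⧸ 𝒢.seq k) (dgnbRel 𝒢 _) := by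
  unfold rhoDgnb
  congr
  funext n p q
  simp only [dgnbRel, subOrbit, eq_comm (b := q)]
  rfl

theorem isWellFounded_quotient [IsTopologicalGroup G] (hcli : IsCLI G) (k : ℕ) :
    IsWellFounded _ (swap (nodeLT (dgnbRel 𝒢 (G ⧸ 𝒢.seq k)))) :=
  have := QuotientGroup.discreteTopology (𝒢.isOpen k)
  ⟨treeWF_of_isOpen_stabilizer hcli 𝒢 (stabilizer_isOpen G)⟩

theorem isWellFounded_sigma [IsTopologicalGroup G] (hcli : IsCLI G) :
    IsWellFounded _ (swap (nodeLT (dgnbRel 𝒢 (Σ k, G ⧸ 𝒢.seq k)))) := by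
  refine ⟨treeWF_of_isOpen_stabilizer hcli 𝒢 fun ⟨k, x⟩ => ?_⟩
  have := QuotientGroup.discreteTopology (𝒢.isOpen k)
  convert stabilizer_isOpen G x using 2
  ext g
  simp [mem_stabilizer_iff, Sigma.smul_mk]

theorem rhoK_le_rhoDgnb [IsTopologicalGroup G] (hcli : IsCLI G) (k : ℕ) :
    rhoK 𝒢 k ≤ rhoDgnb 𝒢 := by
  have := 𝒢.isWellFounded_quotient hcli k
  have := 𝒢.isWellFounded_sigma hcli
  rw [rhoDgnb_eq]
  exact treeRho_le_of_injective (MulActionHom.sigmaMk (fun k => G ⧸ 𝒢.seq k) k)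
    sigma_mk_injective

theorem rhoDgnb_le_iSup_rhoK [IsTopologicalGroup G] (hcli : IsCLI G) :
    rhoDgnb 𝒢 ≤ ⨆ k, rhoK 𝒢 k := by
  have := 𝒢.isWellFounded_quotient hcli
  have := 𝒢.isWellFounded_sigma hcli
  rw [rhoDgnb_eq, treeRho, rhoRel_eq_iSup_rank]
  refine Ordinal.iSup_le fun t => ?_
  obtain ⟨⟨k, x⟩, hx⟩ := t.nonempty
  let ι := MulActionHom.sigmaMk (M := G) (fun k => G ⧸ 𝒢.seq k) k
  calc Order.succ (IsWellFounded.rank _ t)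
      ≤ Order.succ (IsWellFounded.rank _ (t.lift ι x hx)) :=
        Order.succ_le_succ (t.rank_le_rank_lift ι hx)
    _ ≤ rhoK 𝒢 k := succ_rank_le_rhoRel _
    _ ≤ ⨆ k, rhoK 𝒢 k := Ordinal.le_iSup (rhoK 𝒢) k

theorem rhoK_le_rhoK_succ [IsTopologicalGroup G] (hcli : IsCLI G) (k : ℕ) :
    rhoK 𝒢 k ≤ rhoK 𝒢 (k + 1) := by
  have := 𝒢.isWellFounded_quotient hcli
  unfold rhoK
  exact treeRho_le_of_surjective (Subgroup.quotientMapOfLEHom (𝒢.antitone k))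
    (Subgroup.quotientMapOfLEHom_surjective _)

theorem rhoK_lt_omega_one [IsTopologicalGroup G] [TopologicalSpace.SeparableSpace G]
    (hcli : IsCLI G) (k : ℕ) : rhoK 𝒢 k < ω₁ := by
  have := 𝒢.isWellFounded_quotient hcli k
  have := QuotientGroup.countable_of_isOpen (𝒢.isOpen k)
  have := TreeNode.countable (dgnbRel 𝒢 (G ⧸ 𝒢.seq k))
  exact rhoRel_lt_omega_one

theorem rhoK_eq_zero_or_succ [IsTopologicalGroup G] (hcli : IsCLI G) (k : ℕ) :
    rhoK 𝒢 k = 0 ∨ ∃ β, rhoK 𝒢 k = Order.succ β := by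
  have := 𝒢.isWellFounded_quotient hcli k
  exact treeRho_eq_zero_or_succ

end Dgnb

theorem statement_16_general (G : Type) [Group G] [TopologicalSpace G] [IsTopologicalGroup G]
    [PolishSpace G] (hcli : IsCLI G) (𝒢 : Dgnb G) :
    (rhoDgnb 𝒢 = ⨆ k : ℕ, rhoK 𝒢 k) ∧
    (∀ k, rhoK 𝒢 k ≤ rhoK 𝒢 (k + 1)) ∧
    (∀ k, rhoK 𝒢 k < (Cardinal.aleph 1).ord) ∧
    (∀ k, rhoK 𝒢 k = 0 ∨ ∃ β, rhoK 𝒢 k = Order.succ β) :=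
  ⟨(𝒢.rhoDgnb_le_iSup_rhoK hcli).antisymm (Ordinal.iSup_le (𝒢.rhoK_le_rhoDgnb hcli)),
    𝒢.rhoK_le_rhoK_succ hcli,
    fun k => Cardinal.ord_aleph 1 ▸ 𝒢.rhoK_lt_omega_one hcli k,
    𝒢.rhoK_eq_zero_or_succ hcli⟩

theorem statement_16 (G : Type) [Group G] [TopologicalSpace G] [IsTopologicalGroup G]
    [PolishSpace G] (hna : IsNonArch G) (hcli : IsCLI G) (𝒢 : Dgnb G) :
    (rhoDgnb 𝒢 = ⨆ k : ℕ, rhoK 𝒢 k) ∧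
    (∀ k, rhoK 𝒢 k ≤ rhoK 𝒢 (k + 1)) ∧
    (∀ k, rhoK 𝒢 k < (Cardinal.aleph 1).ord) ∧
    (∀ k, rhoK 𝒢 k = 0 ∨ ∃ β, rhoK 𝒢 k = Order.succ β) :=
  statement_16_general G hcli 𝒢
end
end

section
/- Let (G^i)_{i<ω} be a sequence of non-archimedean CLI Polish groups with 𝒢^i = (G^i_n) ∈ dgnb(G^i) for each i < ω. Let G = ∏_i G^i with the product topology, and for each n < ω let G_n = ∏_{i<n} G^i_n × ∏_{i≥n} G^i. Then 𝒢 = (G_n) ∈ dgnb(G), and for every k < ω, ρ^k(𝒢) ≤ max{ρ^k(𝒢^i) : i < k} + k. -/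
noncomputable section

/-!
For `n ≥ k` the `G_n`-orbits on `G/G_k` are products of the `G^i_n`-orbits on `G^i/G^i_k`,
`i < k`, because `G/G_k` embeds into `∏_{i<k} G^i/G^i_k`. So a node of level `≥ k` of the
product tree projects to a node of some coordinate tree, compatibly with the tree order, and its
rank is at most the largest rank of these projections, which is below `max_i ρ^k(𝒢^i)`; the
at most `k` levels below `k` add at most `k`. If instead some coordinate tree is ill-founded, it
embeds into the product tree through `Pi.mulSingle`, so that tree is ill-founded and has rank `0`.
-/

open Function

universe u

section RhoRel

variable {α : Type u} {lt : α → α → Prop}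

lemma rhoRel_of_wellFounded (W : WellFounded (swap lt)) :
    rhoRel lt = ⨆ s, Order.succ (W.apply s).rank := by
  unfold rhoRel
  exact dif_pos W

lemma rhoRel_of_not_wellFounded (h : ¬ WellFounded (swap lt)) : rhoRel lt = 0 := by
  unfold rhoRel
  exact dif_neg h

lemma rank_lt_rhoRel (W : WellFounded (swap lt)) (s : α) : (W.apply s).rank < rhoRel lt := by
  rw [rhoRel_of_wellFounded W]
  exact (Order.lt_succ _).trans_le (Ordinal.le_iSup (fun s => Order.succ (W.apply s).rank) s)

lemma rhoRel_le_of_strictAnti {a : Ordinal.{u}} (f : α → Ordinal.{u})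
    (hf : ∀ ⦃s t⦄, lt s t → f t < f s) (ha : ∀ s, f s < a) : rhoRel lt ≤ a := by
  have W : WellFounded (swap lt) := Subrelation.wf (fun h => hf h) (InvImage.wf f Ordinal.lt_wf)
  have hrank : ∀ s, (W.apply s).rank ≤ f s := fun s =>
    W.induction (C := fun s => (W.apply s).rank ≤ f s) s fun s ih => by
    rw [(W.apply s).rank_eq]
    exact Ordinal.iSup_le fun t => Order.succ_le_of_lt ((ih t t.2).trans_lt (hf t.2))
  rw [rhoRel_of_wellFounded W]
  exact Ordinal.iSup_le fun s => Order.succ_le_of_lt ((hrank s).trans_lt (ha s))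

lemma rhoRel_le_add_of_level (level : α → ℕ)
    (hlevel : ∀ ⦃s t⦄, lt s t → level s < level t) (k : ℕ) {ρ : Ordinal.{u}}
    (f : ∀ s, k ≤ level s → Ordinal.{u})
    (hf : ∀ s t hs ht, lt s t → f t ht < f s hs) (hρ : ∀ s hs, f s hs < ρ) :
    rhoRel lt ≤ ρ + k := by
  -- below level `k`, a node gets `ρ` plus the number of levels left before `k`
  refine rhoRel_le_of_strictAnti
    (fun s => if hs : k ≤ level s then f s hs else ρ + (k - 1 - level s : ℕ))
    (fun s t hst => ?_) (fun s => ?_)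
  · have hst' := hlevel hst
    by_cases ht : k ≤ level t
    · by_cases hs : k ≤ level s
      · simpa only [dif_pos ht, dif_pos hs] using hf s t hs ht hst
      · simpa only [dif_pos ht, dif_neg hs] using (hρ t ht).trans_le le_self_add
    · have hs : ¬ k ≤ level s := by omega
      simp only [dif_neg ht, dif_neg hs]
      have : k - 1 - level t < k - 1 - level s := by omega
      exact (add_lt_add_iff_left ρ).2 (by exact_mod_cast this)
  · split_ifs with hs
    · exact (hρ s hs).trans_le le_self_add
    · exact (add_lt_add_iff_left ρ).2 (by exact_mod_cast (by omega : k - 1 - level s < k))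

end RhoRel

lemma TreeNode.nontrivial {X : Type u} {E : ℕ → X → X → Prop} (hE : ∀ n x, E n x x)
    (s : TreeNode X E) : s.1.2.Nontrivial := by
  obtain ⟨x, hC, hne⟩ := s.2
  exact (Set.nontrivial_iff_ne_singleton (hC ▸ hE _ x)).2 hne

section SubOrbit

variable {Γ Δ : Type*} [Group Γ] [Group Δ] {X Y : Type*} [MulAction Γ X] [MulAction Δ Y]

lemma subOrbit_refl (H : Subgroup Γ) (x : X) : subOrbit H X x x :=
  ⟨1, H.one_mem, one_smul _ _⟩

lemma subOrbit_trans {H : Subgroup Γ} {x y z : X} :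
    subOrbit H X x y → subOrbit H X y z → subOrbit H X x z := by
  rintro ⟨g, hg, rfl⟩ ⟨g', hg', rfl⟩
  exact ⟨g' * g, H.mul_mem hg' hg, mul_smul g' g x⟩

lemma subOrbit_mono {H H' : Subgroup Γ} (hHH' : H ≤ H') {x y : X} :
    subOrbit H X x y → subOrbit H' X x y := by
  rintro ⟨g, hg, rfl⟩
  exact ⟨g, hHH' hg, rfl⟩

variable (p : Γ →* Δ) {φ : X → Y} (hφ : ∀ (g : Γ) x, φ (g • x) = p g • φ x)
include hφ

lemma subOrbit_map {H : Subgroup Γ} {L : Subgroup Δ} (hHL : H ≤ L.comap p) {x y : X} :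
    subOrbit H X x y → subOrbit L Y (φ x) (φ y) := by
  rintro ⟨g, hg, rfl⟩
  exact ⟨p g, hHL hg, (hφ g x).symm⟩

lemma image_setOf_subOrbit {H : Subgroup Γ} {L : Subgroup Δ} (hHL : H.map p = L) (x : X) :
    φ '' {y | subOrbit H X x y} = {y | subOrbit L Y (φ x) y} := by
  ext y
  constructor
  · rintro ⟨z, hz, rfl⟩
    exact subOrbit_map p hφ (Subgroup.map_le_iff_le_comap.1 hHL.le) hz
  · rintro ⟨_, hpg, rfl⟩
    obtain ⟨g, hg, rfl⟩ := hHL ▸ hpg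
    exact ⟨g • x, ⟨g, hg, rfl⟩, hφ g x⟩

lemma treeWF_of_equivariant_injective {H : ℕ → Subgroup Γ} {L : ℕ → Subgroup Δ}
    (hL : Antitone L) (hHL : ∀ n, H n ≤ (L n).comap p) (hφinj : Injective φ)
    (W : TreeWF Y fun n => subOrbit (L n) Y) : TreeWF X fun n => subOrbit (H n) X := by
  let rep (s : TreeNode X fun n => subOrbit (H n) X) : X := s.2.choose
  have hrep (s : TreeNode X fun n => subOrbit (H n) X) :
      s.1.2 = {y | subOrbit (H s.1.1) X (rep s) y} := s.2.choose_spec.1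
  have hrep_mem (s : TreeNode X fun n => subOrbit (H n) X) : rep s ∈ s.1.2 :=
    (hrep s).symm ▸ subOrbit_refl _ _
  let lift (s : TreeNode X fun n => subOrbit (H n) X) : TreeNode Y fun n => subOrbit (L n) Y :=
    ⟨(s.1.1, {y | subOrbit (L s.1.1) Y (φ (rep s)) y}), φ (rep s), rfl, by
      refine Set.Nontrivial.ne_singleton (((TreeNode.nontrivial (fun _ => subOrbit_refl _) s).image
        hφinj).mono ?_)
      rintro _ ⟨y, hy, rfl⟩
      rw [hrep s] at hy
      exact subOrbit_map p hφ (hHL _) hy⟩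
  refine RelHomClass.wellFounded (⟨lift, ?_⟩ : swap (nodeLT _) →r swap (nodeLT _)) W
  rintro t s ⟨hlt, hsub⟩
  refine ⟨hlt, fun y hy => ?_⟩
  have hts : subOrbit (H s.1.1) X (rep s) (rep t) := by
    simpa only [hrep s, Set.mem_ofPred_eq] using hsub (hrep_mem t)
  exact subOrbit_trans (subOrbit_map p hφ (hHL _) hts) (subOrbit_mono (hL hlt.le) hy)

end SubOrbit

section CosetMap

variable {Γ Δ : Type*} [Group Γ] [Group Δ] (p : Γ →* Δ) {H : Subgroup Γ} {L : Subgroup Δ}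

def cosetMap (hHL : H ≤ L.comap p) : Γ ⧸ H → Δ ⧸ L :=
  Quotient.map' p fun a b hab => by
    rw [QuotientGroup.leftRel_apply] at hab ⊢
    simpa only [Subgroup.mem_comap, map_mul, map_inv] using hHL hab

lemma cosetMap_mk (hHL : H ≤ L.comap p) (a : Γ) :
    cosetMap p hHL (a : Γ ⧸ H) = (p a : Δ ⧸ L) :=
  rfl

lemma cosetMap_smul (hHL : H ≤ L.comap p) (g : Γ) (x : Γ ⧸ H) :
    cosetMap p hHL (g • x) = p g • cosetMap p hHL x := by
  induction x using QuotientGroup.induction_on with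
  | H a =>
    rw [MulAction.Quotient.smul_mk, cosetMap_mk, cosetMap_mk, MulAction.Quotient.smul_mk,
      smul_eq_mul, smul_eq_mul, map_mul]

end CosetMap

namespace Dgnb

lemma seq_antitone_s19 {Γ : Type*} [Group Γ] [TopologicalSpace Γ] (𝒢 : Dgnb Γ) :
    Antitone 𝒢.seq :=
  antitone_nat_of_succ_le 𝒢.antitone

variable {G : ℕ → Type u} [∀ i, Group (G i)] [∀ i, TopologicalSpace (G i)]

lemma exists_pi_seq_subset (𝒢 : ∀ i, Dgnb (G i)) {U : Set (∀ i, G i)} (hU : U ∈ nhds 1) :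
    ∃ n, (Subgroup.pi (Set.Iio n) fun i => (𝒢 i).seq n : Set (∀ i, G i)) ⊆ U := by
  rw [nhds_pi, Filter.mem_pi'] at hU
  obtain ⟨I, V, hV, hVU⟩ := hU
  choose m hm using fun i => (𝒢 i).basis (V i) (hV i)
  let N := I.sup fun i => max (i + 1) (m i)
  refine ⟨N, fun g hg => hVU fun i hi => ?_⟩
  have hiN : max (i + 1) (m i) ≤ N := Finset.le_sup (f := fun i => max (i + 1) (m i)) hi
  exact hm i ((𝒢 i).seq_antitone_s19 (le_of_max_le_right hiN)
    ((Subgroup.mem_pi _).1 hg i (Nat.lt_of_succ_le (le_of_max_le_left hiN))))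

def pi (𝒢 : ∀ i, Dgnb (G i)) : Dgnb (∀ i, G i) where
  seq n := Subgroup.pi (Set.Iio n) fun i => (𝒢 i).seq n
  isOpen n := by
    rw [Subgroup.coe_pi]
    exact isOpen_set_pi (Set.finite_Iio n) fun i _ => (𝒢 i).isOpen n
  antitone n _ hg := (Subgroup.mem_pi _).2 fun i hi =>
    (𝒢 i).seq_antitone_s19 n.le_succ ((Subgroup.mem_pi _).1 hg i (lt_trans hi n.lt_succ_self))
  zero_eq_top := by simp only [Set.Iio_zero_eq_empty (α := ℕ), Subgroup.pi_empty]
  basis _ := exists_pi_seq_subset 𝒢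

end Dgnb

section Product

variable {G : ℕ → Type u} [∀ i, Group (G i)] [∀ i, TopologicalSpace (G i)]
  (𝒢 : ∀ i, Dgnb (G i)) (k : ℕ)

lemma map_evalMonoidHom_pi_seq {i n : ℕ} (hi : i < n) :
    ((Dgnb.pi 𝒢).seq n).map (Pi.evalMonoidHom G i) = (𝒢 i).seq n := by
  refine le_antisymm ?_ fun h hh => ?_
  · rintro _ ⟨g, hg, rfl⟩
    exact (Subgroup.mem_pi _).1 hg i hi
  · exact ⟨Pi.mulSingle i h, (Subgroup.mulSingle_mem_pi i h).2 fun _ => hh,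
      Pi.mulSingle_eq_same i h⟩

lemma mulSingle_pi_seq_le (i n : ℕ) :
    (𝒢 i).seq n ≤ ((Dgnb.pi 𝒢).seq n).comap (MonoidHom.mulSingle G i) :=
  fun h hh => (Subgroup.mulSingle_mem_pi i h).2 fun _ => hh

abbrev PiCosets : Type u := (∀ l, G l) ⧸ (Dgnb.pi 𝒢).seq k

def cosetProj (i : Fin k) : PiCosets 𝒢 k → G i ⧸ (𝒢 i).seq k :=
  cosetMap (Pi.evalMonoidHom G i)
    (Subgroup.map_le_iff_le_comap.1 (map_evalMonoidHom_pi_seq 𝒢 i.isLt).le)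

def cosetLift (i : ℕ) : G i ⧸ (𝒢 i).seq k → PiCosets 𝒢 k :=
  cosetMap (MonoidHom.mulSingle G i) (mulSingle_pi_seq_le 𝒢 i k)

lemma cosetProj_smul (i : Fin k) (g : ∀ l, G l) (x : PiCosets 𝒢 k) :
    cosetProj 𝒢 k i (g • x) = g i • cosetProj 𝒢 k i x :=
  cosetMap_smul _ _ g x

lemma cosetLift_smul (i : ℕ) (h : G i) (x : G i ⧸ (𝒢 i).seq k) :
    cosetLift 𝒢 k i (h • x) = Pi.mulSingle i h • cosetLift 𝒢 k i x :=
  cosetMap_smul _ _ h x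

lemma cosetProj_cosetLift (i : Fin k) : LeftInverse (cosetProj 𝒢 k i) (cosetLift 𝒢 k i) := by
  intro x
  induction x using QuotientGroup.induction_on with
  | H a => exact congrArg _ (Pi.mulSingle_eq_same (i : ℕ) a)

lemma injective_cosetProj : Injective fun (x : PiCosets 𝒢 k) i => cosetProj 𝒢 k i x := by
  intro x y hxy
  induction x using QuotientGroup.induction_on with | H a => ?_
  induction y using QuotientGroup.induction_on with | H b => ?_
  refine QuotientGroup.eq.2 ((Subgroup.mem_pi _).2 fun i hi => ?_)
  exact QuotientGroup.eq.1 (congrFun hxy ⟨i, hi⟩)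

lemma image_cosetProj_setOf_subOrbit (i : Fin k) {n : ℕ} (hn : k ≤ n) (x : PiCosets 𝒢 k) :
    cosetProj 𝒢 k i '' {y | subOrbit ((Dgnb.pi 𝒢).seq n) _ x y}
      = {y | subOrbit ((𝒢 i).seq n) _ (cosetProj 𝒢 k i x) y} :=
  image_setOf_subOrbit _ (cosetProj_smul 𝒢 k i)
    (map_evalMonoidHom_pi_seq 𝒢 (i.isLt.trans_le hn)) x

local notation "𝕋" => TreeNode (PiCosets 𝒢 k) (dgnbRel (Dgnb.pi 𝒢) (PiCosets 𝒢 k))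

lemma exists_nontrivial_image_cosetProj (s : 𝕋) :
    ∃ i, (cosetProj 𝒢 k i '' s.1.2).Nontrivial := by
  obtain ⟨x, hx, y, hy, hxy⟩ := TreeNode.nontrivial (fun _ => subOrbit_refl _) s
  obtain ⟨i, hi⟩ := not_forall.1 fun h => hxy (injective_cosetProj 𝒢 k (funext h))
  exact ⟨i, ⟨_, ⟨x, hx, rfl⟩, _, ⟨y, hy, rfl⟩, hi⟩⟩

def projNode (s : 𝕋) (hs : k ≤ s.1.1) (i : Fin k)
    (h : (cosetProj 𝒢 k i '' s.1.2).Nontrivial) :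
    TreeNode (G i ⧸ (𝒢 i).seq k) (dgnbRel (𝒢 i) (G i ⧸ (𝒢 i).seq k)) :=
  ⟨(s.1.1, cosetProj 𝒢 k i '' s.1.2), by
    obtain ⟨x, hx, -⟩ := s.2
    exact ⟨cosetProj 𝒢 k i x, hx ▸ image_cosetProj_setOf_subOrbit 𝒢 k i hs x,
      h.ne_singleton⟩⟩

variable {𝒢 k}

lemma nodeLT_projNode {s t : 𝕋} (hst : nodeLT _ s t) {hs ht} (i : Fin k) (hsi hti) :
    nodeLT _ (projNode 𝒢 k s hs i hsi) (projNode 𝒢 k t ht i hti) :=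
  ⟨hst.1, Set.image_mono hst.2⟩

variable
  (W : ∀ i : Fin k, TreeWF (G i ⧸ (𝒢 i).seq k) (dgnbRel (𝒢 i) (G i ⧸ (𝒢 i).seq k)))

-- A coordinate with singleton projection contributes `⨆` over a false proposition, i.e. `0`.
def piRank (s : 𝕋) (hs : k ≤ s.1.1) : Ordinal.{u} :=
  Finset.univ.sup fun i =>
    ⨆ h : (cosetProj 𝒢 k i '' s.1.2).Nontrivial, ((W i).apply (projNode 𝒢 k s hs i h)).rank

lemma rank_projNode_le_piRank {s : 𝕋} (hs : k ≤ s.1.1) (i : Fin k) (h) :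
    ((W i).apply (projNode 𝒢 k s hs i h)).rank ≤ piRank W s hs :=
  Finset.le_sup_of_le (Finset.mem_univ i)
    (ciSup_pos (f := fun h => ((W i).apply (projNode 𝒢 k s hs i h)).rank) h).ge

lemma piRank_lt {s : 𝕋} (hs : k ≤ s.1.1) {a : Ordinal.{u}}
    (ha : ∀ i h, ((W i).apply (projNode 𝒢 k s hs i h)).rank < a) : piRank W s hs < a := by
  obtain ⟨i₀, hi₀⟩ := exists_nontrivial_image_cosetProj 𝒢 k s
  have ha₀ : 0 < a := zero_le.trans_lt (ha i₀ hi₀)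
  refine (Finset.sup_lt_iff ha₀).2 fun i _ => ?_
  by_cases hi : (cosetProj 𝒢 k i '' s.1.2).Nontrivial
  · rw [ciSup_pos hi]
    exact ha i hi
  · rwa [ciSup_neg hi, csSup_empty]

lemma piRank_lt_of_nodeLT {s t : 𝕋} (hs : k ≤ s.1.1) (ht : k ≤ t.1.1) (hst : nodeLT _ s t) :
    piRank W t ht < piRank W s hs :=
  piRank_lt W ht fun i hti =>
    have hsi : (cosetProj 𝒢 k i '' s.1.2).Nontrivial := hti.mono (Set.image_mono hst.2)
    ((W i).apply _).rank_lt_of_rel (nodeLT_projNode hst i hsi hti)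
      |>.trans_le (rank_projNode_le_piRank W hs i hsi)

lemma piRank_lt_iSup_rhoK (s : 𝕋) (hs : k ≤ s.1.1) :
    piRank W s hs < ⨆ i : Fin k, rhoK (𝒢 i) k :=
  piRank_lt W hs fun i _ => (rank_lt_rhoRel (W i) _).trans_le
    (Ordinal.le_iSup (fun i : Fin k => rhoK (𝒢 i) k) i)

variable (𝒢 k) in
theorem rhoK_pi_le : rhoK (Dgnb.pi 𝒢) k ≤ (⨆ i : Fin k, rhoK (𝒢 i) k) + k := by
  by_cases hW :
      ∀ i : Fin k, TreeWF (G i ⧸ (𝒢 i).seq k) (dgnbRel (𝒢 i) (G i ⧸ (𝒢 i).seq k))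
  · exact rhoRel_le_add_of_level (fun s => s.1.1) (fun _ _ hst => hst.1) k (piRank hW)
      (fun _ _ hs ht hst => piRank_lt_of_nodeLT hW hs ht hst) (piRank_lt_iSup_rhoK hW)
  · obtain ⟨i, hi⟩ := not_forall.1 hW
    have hnwf : ¬ TreeWF (PiCosets 𝒢 k) (dgnbRel (Dgnb.pi 𝒢) (PiCosets 𝒢 k)) := fun W =>
      hi (treeWF_of_equivariant_injective _ (cosetLift_smul 𝒢 k i) (Dgnb.pi 𝒢).seq_antitone_s19
        (fun n => mulSingle_pi_seq_le 𝒢 i n) (cosetProj_cosetLift 𝒢 k i).injective W)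
    rw [rhoK, treeRho, rhoRel_of_not_wellFounded hnwf]
    exact zero_le

end Product

theorem statement_19_general (G : ℕ → Type) [∀ i, Group (G i)] [∀ i, TopologicalSpace (G i)]
    (𝒢 : ∀ i, Dgnb (G i)) :
    ∃ 𝒦 : Dgnb (∀ i, G i),
      (∀ n, 𝒦.seq n = Subgroup.pi (Set.Iio n) (fun i => (𝒢 i).seq n)) ∧
      ∀ k : ℕ, rhoK 𝒦 k ≤ (⨆ i : Fin k, rhoK (𝒢 i) k) + (k : Ordinal) :=
  ⟨Dgnb.pi 𝒢, fun _ => rfl, rhoK_pi_le 𝒢⟩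

theorem statement_19 (G : ℕ → Type) [∀ i, Group (G i)] [∀ i, TopologicalSpace (G i)]
    [∀ i, IsTopologicalGroup (G i)] [∀ i, PolishSpace (G i)]
    (hna : ∀ i, IsNonArch (G i)) (hcli : ∀ i, IsCLI (G i))
    (𝒢 : ∀ i, Dgnb (G i)) :
    ∃ 𝒦 : Dgnb (∀ i, G i),
      (∀ n, 𝒦.seq n = Subgroup.pi (Set.Iio n) (fun i => (𝒢 i).seq n)) ∧
      ∀ k : ℕ, rhoK 𝒦 k ≤ (⨆ i : Fin k, rhoK (𝒢 i) k) + (k : Ordinal) :=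
  statement_19_general G 𝒢

end
end
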